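/- Let n be a natural number, let W be a finite-dimensional real vector space, let P = MvPolynomial (Fin n) ℝ be the polynomial algebra in variables X₁, …, Xₙ, let F : (Fin n → ℝ) → W be an injective linear map, and write Fμ = F(e_μ) for the standard basis vectors e_μ. Define d_F = Σ_{μ=1}^{n} (∂/∂X_μ) ⊗ (x ↦ ι(Fμ) ∧ x) on P ⊗ ΛW. Then for every k ≥ 1, every element x of P_k ⊗ ΛW (where P_k ⊆ P is the subspace of homogeneous polynomials of total degree k) with d_F(x) = 0 lies in the image of d_F; that is, there exists y ∈ P ⊗ ΛW with x = d_F(y). -/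

import Mathlib

open scoped TensorProduct
open ExteriorAlgebra MvPolynomial

/-!
Choose a left inverse `G` of `F`, let `Cᵢ` be contraction with the `i`-th coordinate of `G`, and
put `h = ∑ᵢ Xᵢ ⊗ Cᵢ`. The relations `[∂ⱼ, Xᵢ] = δᵢⱼ` and `Cᵢ ι(F eⱼ) + ι(F eⱼ) Cᵢ = δᵢⱼ` give
`d h + h d = E ⊗ 1 + 1 ⊗ N`, where `E = ∑ᵢ Xᵢ ∂ᵢ` is the Euler operator, equal to `k` on `P_k`,
and `N = ∑ᵢ ι(F eᵢ) Cᵢ` counts the exterior factors taken from the range of the projection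
`F ∘ G`, so `ΛW` is spanned by eigenvectors of `N` with eigenvalues in `ℕ`. As `d N = (N - 1) d`,
a closed `x ∈ P_k ⊗ ΛW` killed by `∏_{j ≤ m} (N - j)` satisfies `(k + m) x = d (h x) - (N - m) x`,
where `(N - m) x` is again closed and killed by `∏_{j < m} (N - j)`; induct on `m`.
-/

section NatEigenvalues

variable {R V : Type*} [CommRing R] [AddCommGroup V] [Module R V]

theorem aeval_descPochhammer_apply_eq_zero_of_le {f : Module.End R V} {x : V} {m n : ℕ}
    (hmn : m ≤ n) (hx : Polynomial.aeval f (descPochhammer R m) x = 0) :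
    Polynomial.aeval f (descPochhammer R n) x = 0 := by
  obtain ⟨j, rfl⟩ := Nat.exists_eq_add_of_le hmn
  rw [← descPochhammer_mul, mul_comm, map_mul, Module.End.mul_apply, hx, map_zero]

theorem exists_aeval_descPochhammer_apply_eq_zero {f : Module.End R V} {x : V}
    (hx : x ∈ ⨆ a : ℕ, f.eigenspace (a : R)) :
    ∃ m, Polynomial.aeval f (descPochhammer R m) x = 0 := by
  induction hx using Submodule.iSup_induction' with
  | mem a x hx =>
    refine ⟨a + 1, ?_⟩
    rw [descPochhammer_succ_right, map_mul, Module.End.mul_apply]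
    simp [Module.End.mem_eigenspace_iff.mp hx, Nat.cast_smul_eq_nsmul]
  | zero => exact ⟨0, map_zero _⟩
  | add x y _ _ hx hy =>
    obtain ⟨m, hm⟩ := hx
    obtain ⟨n, hn⟩ := hy
    refine ⟨max m n, ?_⟩
    rw [map_add, aeval_descPochhammer_apply_eq_zero_of_le (le_max_left m n) hm,
      aeval_descPochhammer_apply_eq_zero_of_le (le_max_right m n) hn, add_zero]

theorem iSup_eigenspace_lTensor_eq_top (M : Type*) [AddCommGroup M] [Module R M]
    {ι : Type*} (μ : ι → R) {f : Module.End R V} (hf : ⨆ i, f.eigenspace (μ i) = ⊤) :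
    ⨆ i, Module.End.eigenspace (f.lTensor M) (μ i) = ⊤ := by
  refine Submodule.eq_top_iff'.mpr fun z => ?_
  induction z using TensorProduct.induction_on with
  | zero => exact zero_mem _
  | add z z' hz hz' => exact add_mem hz hz'
  | tmul p w =>
    have hw : w ∈ ⨆ i, f.eigenspace (μ i) := hf ▸ Submodule.mem_top
    induction hw using Submodule.iSup_induction' with
    | mem i w hw =>
      refine Submodule.mem_iSup_of_mem i (Module.End.mem_eigenspace_iff.mpr ?_)
      rw [LinearMap.lTensor_tmul, Module.End.mem_eigenspace_iff.mp hw, TensorProduct.tmul_smul]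
    | zero => rw [TensorProduct.tmul_zero]; exact zero_mem _
    | add w w' _ _ hw hw' => rw [TensorProduct.tmul_add]; exact add_mem hw hw'

theorem mem_range_of_homotopy {K V : Type*} [Field K] [AddCommGroup V] [Module K V]
    {d h E M : Module.End K V} (hdM : d * M = (M - 1) * d) (hEM : Commute E M)
    (hhom : d * h + h * d = E + M) {c : K} (hc : ∀ j : ℕ, c + j ≠ 0) (m : ℕ) :
    ∀ {x : V}, E x = c • x → d x = 0 → Polynomial.aeval M (descPochhammer K m) x = 0 →
      x ∈ LinearMap.range d := by
  induction m with
  | zero =>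
    intro x _ _ hx
    rw [descPochhammer_zero, map_one, Module.End.one_apply] at hx
    exact hx ▸ zero_mem _
  | succ m ih =>
    intro x hEx hdx hx
    set x' := M x - (m : K) • x with hx'
    have hEx' : E x' = c • x' := by
      rw [hx', map_sub, map_smul, ← Module.End.mul_apply, hEM.eq, Module.End.mul_apply, hEx,
        map_smul, smul_sub, smul_comm]
    have hdx' : d x' = 0 := by
      rw [hx', map_sub, map_smul, ← Module.End.mul_apply, hdM]
      simp [hdx]
    have hkill : Polynomial.aeval M (descPochhammer K m) x' = 0 := by
      rw [descPochhammer_succ_right, map_mul, Module.End.mul_apply] at hx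
      simpa [hx', Nat.cast_smul_eq_nsmul] using hx
    have hcx : c • x + M x ∈ LinearMap.range d :=
      ⟨h x, by simpa [hdx, hEx] using congr($hhom x)⟩
    have hcmx : (c + m) • x ∈ LinearMap.range d := by
      convert sub_mem hcx (ih hEx' hdx' hkill) using 1
      rw [hx', add_smul]; abel
    simpa [smul_smul, inv_mul_cancel₀ (hc m)] using Submodule.smul_mem _ (c + m)⁻¹ hcmx

end NatEigenvalues

theorem commute_rTensor_lTensor {R M N : Type*} [CommRing R] [AddCommGroup M] [Module R M]
    [AddCommGroup N] [Module R N] (f : Module.End R M) (g : Module.End R N) :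
    Commute (f.rTensor N) (g.lTensor M) :=
  (LinearMap.rTensor_comp_lTensor _ _ _).trans (LinearMap.lTensor_comp_rTensor _ _ _).symm

section EulerOperator

variable (σ R : Type*) [CommRing R] [Fintype σ]

noncomputable def eulerOp : Module.End R (MvPolynomial σ R) :=
  ∑ i, LinearMap.mulLeft R (X i) ∘ₗ (pderiv i).toLinearMap

variable {σ R} in
theorem eulerOp_comp_subtype (k : ℕ) :
    eulerOp σ R ∘ₗ (homogeneousSubmodule σ R k).subtype =
      (k : R) • (homogeneousSubmodule σ R k).subtype := by
  ext ⟨p, hp⟩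
  simp [eulerOp, (mem_homogeneousSubmodule k p).mp hp |>.sum_X_mul_pderiv, Nat.cast_smul_eq_nsmul]

end EulerOperator

section NumberOperator

variable {σ R W : Type*} [CommRing R] [AddCommGroup W] [Module R W]

noncomputable def coordContract (G : W →ₗ[R] σ → R) (i : σ) : Module.End R (ExteriorAlgebra R W) :=
  CliffordAlgebra.contractLeft (LinearMap.proj i ∘ₗ G)

theorem coordContract_ι_mul (G : W →ₗ[R] σ → R) (i : σ) (v : W) (y : ExteriorAlgebra R W) :
    coordContract G i (ι R v * y) = G v i • y - ι R v * coordContract G i y :=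
  CliffordAlgebra.contractLeft_ι_mul _ v y

variable [Fintype σ] [DecidableEq σ] (F : (σ → R) →ₗ[R] W) (G : W →ₗ[R] σ → R)

noncomputable def numberOp : Module.End R (ExteriorAlgebra R W) :=
  ∑ i, LinearMap.mulLeft R (ι R (F (Pi.single i 1))) ∘ₗ coordContract G i

theorem numberOp_apply (y : ExteriorAlgebra R W) :
    numberOp F G y = ∑ i, ι R (F (Pi.single i 1)) * coordContract G i y := by
  simp [numberOp]

theorem apply_eq_sum_smul_single (v : σ → R) : F v = ∑ i, v i • F (Pi.single i 1) := by
  simp_rw [← map_smul, ← map_sum, ← Pi.single_smul, smul_eq_mul, mul_one, Finset.univ_sum_single]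

theorem numberOp_ι_mul (v : W) (y : ExteriorAlgebra R W) :
    numberOp F G (ι R v * y) = ι R (F (G v)) * y + ι R v * numberOp F G y := by
  have hterm (i : σ) : ι R (F (Pi.single i 1)) * coordContract G i (ι R v * y) =
      G v i • (ι R (F (Pi.single i 1)) * y) + ι R v * (ι R (F (Pi.single i 1)) *
        coordContract G i y) := by
    rw [coordContract_ι_mul, mul_sub, mul_smul_comm, ← mul_assoc, ← mul_assoc,
      eq_neg_of_add_eq_zero_left (ι_add_mul_swap (R := R) _ v), neg_mul, sub_neg_eq_add]
  simp_rw [numberOp_apply, hterm, Finset.sum_add_distrib, ← Finset.mul_sum,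
    apply_eq_sum_smul_single F (G v), map_sum, map_smul, Finset.sum_mul, smul_mul_assoc]

theorem numberOp_one : numberOp F G (1 : ExteriorAlgebra R W) = 0 := by
  simp [numberOp_apply, coordContract]

theorem iSup_eigenspace_numberOp_eq_top (hGF : G ∘ₗ F = LinearMap.id) :
    ⨆ a : ℕ, Module.End.eigenspace (numberOp F G) (a : R) = ⊤ := by
  have hGF' (u : σ → R) : G (F u) = u := LinearMap.congr_fun hGF u
  refine Submodule.eq_top_iff'.mpr fun y => ?_
  induction y using CliffordAlgebra.left_induction with
  | algebraMap r =>
    refine Submodule.mem_iSup_of_mem 0 (Module.End.mem_eigenspace_iff.mpr ?_)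
    rw [Algebra.algebraMap_eq_smul_one, map_smul, numberOp_one]
    simp
  | add y y' hy hy' => exact add_mem hy hy'
  | ι_mul y v hy =>
    induction hy using Submodule.iSup_induction' with
    | mem a y hy =>
      have hNy := Module.End.mem_eigenspace_iff.mp hy
      -- `F ∘ G` is a projection: split `v` into its image and kernel components
      rw [← add_sub_cancel (F (G v)) v, map_add, add_mul]
      refine add_mem (Submodule.mem_iSup_of_mem (a + 1) (Module.End.mem_eigenspace_iff.mpr ?_))
        (Submodule.mem_iSup_of_mem a (Module.End.mem_eigenspace_iff.mpr ?_))
      · rw [numberOp_ι_mul, hGF', hNy, mul_smul_comm]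
        push_cast
        rw [add_smul, one_smul, add_comm]
      · rw [numberOp_ι_mul, map_sub, hGF', sub_self, map_zero, map_zero, zero_mul, zero_add,
          hNy, mul_smul_comm]
    | zero => rw [mul_zero]; exact zero_mem _
    | add y y' _ _ hy hy' => rw [mul_add]; exact add_mem hy hy'

end NumberOperator

section CartanPoincare

variable {σ R W : Type*} [CommRing R] [AddCommGroup W] [Module R W] [Fintype σ]
  (F : (σ → R) →ₗ[R] W) (G : W →ₗ[R] σ → R)

noncomputable def cartanPoincareHomotopy :
    Module.End R (MvPolynomial σ R ⊗[R] ExteriorAlgebra R W) :=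
  ∑ i, TensorProduct.map (LinearMap.mulLeft R (X i)) (coordContract G i)

theorem cartanPoincareHomotopy_tmul (p : MvPolynomial σ R) (w : ExteriorAlgebra R W) :
    cartanPoincareHomotopy G (p ⊗ₜ w) = ∑ i, (X i * p) ⊗ₜ coordContract G i w := by
  simp [cartanPoincareHomotopy, LinearMap.sum_apply]

variable [DecidableEq σ]

noncomputable def cartanPoincare :
    Module.End R (MvPolynomial σ R ⊗[R] ExteriorAlgebra R W) :=
  ∑ i, TensorProduct.map (pderiv i).toLinearMap (LinearMap.mulLeft R (ι R (F (Pi.single i 1))))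

theorem cartanPoincare_tmul (p : MvPolynomial σ R) (w : ExteriorAlgebra R W) :
    cartanPoincare F (p ⊗ₜ w) = ∑ i, pderiv i p ⊗ₜ (ι R (F (Pi.single i 1)) * w) := by
  simp [cartanPoincare, LinearMap.sum_apply]

theorem cartanPoincare_mul_lTensor_numberOp (hGF : G ∘ₗ F = LinearMap.id) :
    cartanPoincare F * (numberOp F G).lTensor _ =
      ((numberOp F G).lTensor _ - 1) * cartanPoincare F := by
  have hGF' (u : σ → R) : G (F u) = u := LinearMap.congr_fun hGF u
  refine TensorProduct.ext' fun p w => ?_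
  simp only [Module.End.mul_apply, LinearMap.lTensor_tmul, cartanPoincare_tmul, map_sum,
    LinearMap.sub_apply, Module.End.one_apply, numberOp_ι_mul, hGF', TensorProduct.tmul_add,
    add_sub_cancel_left]

theorem cartanPoincare_mul_homotopy_add (hGF : G ∘ₗ F = LinearMap.id) :
    cartanPoincare F * cartanPoincareHomotopy G + cartanPoincareHomotopy G * cartanPoincare F =
      (eulerOp σ R).rTensor _ + (numberOp F G).lTensor _ := by
  have hGF' (u : σ → R) : G (F u) = u := LinearMap.congr_fun hGF u
  refine TensorProduct.ext' fun p w => ?_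
  have key (i j : σ) :
      pderiv j (X i * p) ⊗ₜ[R] (ι R (F (Pi.single j 1)) * coordContract G i w) +
        (X i * pderiv j p) ⊗ₜ[R] coordContract G i (ι R (F (Pi.single j 1)) * w) =
      if j = i then p ⊗ₜ[R] (ι R (F (Pi.single i 1)) * coordContract G i w) +
        (X i * pderiv i p) ⊗ₜ[R] w else 0 := by
    rw [Derivation.leibniz, coordContract_ι_mul, hGF', pderiv_X]
    split_ifs with h
    · subst h
      simp only [Pi.single_eq_same, smul_eq_mul, mul_one, one_smul, TensorProduct.add_tmul,
        TensorProduct.tmul_sub]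
      abel
    · simp [Ne.symm h, TensorProduct.tmul_neg]
  simp only [LinearMap.add_apply, Module.End.mul_apply, cartanPoincareHomotopy_tmul,
    cartanPoincare_tmul, map_sum]
  conv_lhs => arg 2; rw [Finset.sum_comm]
  simp_rw [← Finset.sum_add_distrib, key, Finset.sum_ite_eq', Finset.mem_univ, if_true,
    Finset.sum_add_distrib]
  simp [eulerOp, numberOp_apply, TensorProduct.tmul_sum, TensorProduct.sum_tmul, add_comm]

end CartanPoincare

theorem stmt19_general (n : ℕ) (W : Type*) [AddCommGroup W] [Module ℝ W]
    (F : (Fin n → ℝ) →ₗ[ℝ] W) (hF : Function.Injective F)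
    (dF : (MvPolynomial (Fin n) ℝ ⊗[ℝ] ExteriorAlgebra ℝ W) →ₗ[ℝ]
          (MvPolynomial (Fin n) ℝ ⊗[ℝ] ExteriorAlgebra ℝ W))
    (hdF : dF = ∑ μ : Fin n,
      TensorProduct.map (MvPolynomial.pderiv μ).toLinearMap
        (LinearMap.mulLeft ℝ (ExteriorAlgebra.ι ℝ (F (Pi.single μ 1)))))
    (k : ℕ) (hk : 1 ≤ k)
    (x : MvPolynomial (Fin n) ℝ ⊗[ℝ] ExteriorAlgebra ℝ W)
    (hx : x ∈ LinearMap.range (TensorProduct.map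
      (MvPolynomial.homogeneousSubmodule (Fin n) ℝ k).subtype
      (LinearMap.id : ExteriorAlgebra ℝ W →ₗ[ℝ] ExteriorAlgebra ℝ W)))
    (hclosed : dF x = 0) :
    ∃ y : MvPolynomial (Fin n) ℝ ⊗[ℝ] ExteriorAlgebra ℝ W, dF y = x := by
  obtain ⟨G, hGF⟩ := F.exists_leftInverse_of_injective (LinearMap.ker_eq_bot.mpr hF)
  subst hdF
  have hEuler : (eulerOp (Fin n) ℝ).rTensor _ x = (k : ℝ) • x := by
    obtain ⟨u, rfl⟩ := hx
    rw [← LinearMap.comp_apply, LinearMap.rTensor_comp_map, eulerOp_comp_subtype,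
      TensorProduct.map_smul_left, LinearMap.smul_apply]
  have hspan := iSup_eigenspace_lTensor_eq_top (MvPolynomial (Fin n) ℝ) (fun a : ℕ => (a : ℝ))
    (iSup_eigenspace_numberOp_eq_top F G hGF)
  obtain ⟨m, hm⟩ := exists_aeval_descPochhammer_apply_eq_zero (x := x) (hspan ▸ Submodule.mem_top)
  exact mem_range_of_homotopy (cartanPoincare_mul_lTensor_numberOp F G hGF)
    (commute_rTensor_lTensor _ _) (cartanPoincare_mul_homotopy_add F G hGF)
    (fun j => by positivity) m hEuler hclosed hm

/-- if `F : ℝⁿ → W` is an injective linear map, then the Cartan–Poincaré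
operator `d_F = Σ_μ (∂/∂X_μ) ⊗ (ι(Fμ) ∧ ·)` on `P ⊗ ΛW` is exact on elements whose
polynomial part is homogeneous of degree `k ≥ 1`: every `d_F`-closed element of
`P_k ⊗ ΛW` lies in the image of `d_F`. -/
theorem stmt19 (n : ℕ) (W : Type*) [AddCommGroup W] [Module ℝ W] [FiniteDimensional ℝ W]
    (F : (Fin n → ℝ) →ₗ[ℝ] W) (hF : Function.Injective F)
    (dF : (MvPolynomial (Fin n) ℝ ⊗[ℝ] ExteriorAlgebra ℝ W) →ₗ[ℝ]
          (MvPolynomial (Fin n) ℝ ⊗[ℝ] ExteriorAlgebra ℝ W))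
    (hdF : dF = ∑ μ : Fin n,
      TensorProduct.map (MvPolynomial.pderiv μ).toLinearMap
        (LinearMap.mulLeft ℝ (ExteriorAlgebra.ι ℝ (F (Pi.single μ 1)))))
    (k : ℕ) (hk : 1 ≤ k)
    (x : MvPolynomial (Fin n) ℝ ⊗[ℝ] ExteriorAlgebra ℝ W)
    (hx : x ∈ LinearMap.range (TensorProduct.map
      (MvPolynomial.homogeneousSubmodule (Fin n) ℝ k).subtype
      (LinearMap.id : ExteriorAlgebra ℝ W →ₗ[ℝ] ExteriorAlgebra ℝ W)))
    (hclosed : dF x = 0) :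
    ∃ y : MvPolynomial (Fin n) ℝ ⊗[ℝ] ExteriorAlgebra ℝ W, dF y = x :=
  stmt19_general n W F hF dF hdF k hk x hx hclosed
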